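/- arXiv:1012.1777 — 2 statements merged into one kernel-verified Lean document; each statement's English description precedes it below -/
import Mathlib

section
/- Let D = ⟨x, y | x^(2^r) = y^(2^s) = [x,y]^2 = [x,[x,y]] = [y,[x,y]] = 1⟩ with r ≥ s ≥ 1. Then the Frattini subgroup of D equals the center of D, and both equal ⟨x², y², [x,y]⟩, which is isomorphic to C_{2^(r-1)} × C_{2^(s-1)} × C₂. -/
open scoped commutatorElement

/-- The generator `x` of the free group on two letters. -/
def gx : FreeGroup (Fin 2) := FreeGroup.of 0

/-- The generator `y` of the free group on two letters. -/
def gy : FreeGroup (Fin 2) := FreeGroup.of 1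

/-- The relations of the Rédei presentation with parameters `r`, `s`:
`x^(2^r)`, `y^(2^s)`, `⁅x,y⁆^2`, `⁅x,⁅x,y⁆⁆`, `⁅y,⁅x,y⁆⁆`,
where `⁅a,b⁆ = a*b*a⁻¹*b⁻¹`. -/
def redeiRels (r s : ℕ) : Set (FreeGroup (Fin 2)) :=
  {gx ^ (2 ^ r), gy ^ (2 ^ s), ⁅gx, gy⁆ ^ 2, ⁅gx, ⁅gx, gy⁆⁆, ⁅gy, ⁅gx, gy⁆⁆}

/-- The Rédei group `⟨x,y ∣ x^(2^r) = y^(2^s) = [x,y]^2 = [x,[x,y]] = [y,[x,y]] = 1⟩`. -/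
abbrev RedeiGroup (r s : ℕ) := PresentedGroup (redeiRels r s)

/-- The image of the generator `x` in the Rédei group. -/
def Dx (r s : ℕ) : RedeiGroup r s := PresentedGroup.of 0

/-- The image of the generator `y` in the Rédei group. -/
def Dy (r s : ℕ) : RedeiGroup r s := PresentedGroup.of 1

/-- The element `z = [x,y]` of the Rédei group. -/
def Dz (r s : ℕ) : RedeiGroup r s := ⁅Dx r s, Dy r s⁆

/-!
Realise the presentation on `ℤ/2^r × ℤ/2^s × ℤ/2` with the product
`(a, b, c) (a', b', c') = (a + a', b + b', c + c' + a b')`, the last term read mod 2. Since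
`z = [x, y]` is central, the collection formula `x^a y^b = z^(ab) y^b x^a` makes
`y^b x^a z^c ↦ (a, b, c)` an isomorphism. In this model the center is `{a, b even}`, the
intersection of the kernels of the two parity characters; these kernels have index 2, so they
are maximal and the Frattini subgroup lies in the center. Conversely the center is generated by
`x²`, `y²` and `z = x² (x⁻¹ y)² y⁻²`, all squares, and in a finite 2-group every maximal subgroup
is normal of index 2, hence contains all squares. Halving `a` and `b` identifies the center with
`C_{2^(r-1)} × C_{2^(s-1)} × C_2`.
-/

section Frattini

variable {G H : Type*} [Group G] [Group H]

theorem MulEquiv.comap_frattini (e : G ≃* H) : (frattini H).comap e = frattini G := by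
  rw [Subgroup.comap_equiv_eq_map_symm]
  exact e.symm.mapSubgroup.map_radical

theorem MulEquiv.comap_center (e : G ≃* H) :
    (Subgroup.center H).comap e = Subgroup.center G := by
  ext g
  exact MulEquivClass.apply_mem_center_iff e

theorem frattini_le_ker_of_card_eq_prime {p : ℕ} [hp : Fact p.Prime] (hH : Nat.card H = p)
    {f : G →* H} (hf : Function.Surjective f) : frattini G ≤ f.ker := by
  have : Fact (Nat.card H).Prime := hH ▸ hp
  have hbot : IsCoatom (⊥ : Subgroup H) :=
    ⟨fun h => hp.out.ne_one (by rw [← hH, ← Subgroup.card_top, ← h, Subgroup.card_bot]),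
      fun K hK => K.eq_bot_or_eq_top_of_prime_card.resolve_left hK.ne'⟩
  rw [← MonoidHom.comap_bot]
  exact frattini_le_coatom (Subgroup.isCoatom_comap_of_surjective hf hbot)

theorem IsPGroup.index_eq_of_isCoatom [Finite G] {p : ℕ} [hp : Fact p.Prime] (hG : IsPGroup p G)
    {M : Subgroup G} (hM : IsCoatom M) : M.index = p := by
  obtain ⟨n, hn⟩ := IsPGroup.iff_card.mp (hG.to_subgroup M)
  obtain ⟨k, hk⟩ := hG.index M
  have hk0 : k ≠ 0 := by
    rintro rfl
    exact hM.1 (Subgroup.index_eq_one.mp hk)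
  have hdvd : p ^ (n + 1) ∣ Nat.card G := by
    rw [← M.card_mul_index, hn, hk, pow_succ]
    exact mul_dvd_mul_left _ (dvd_pow_self p hk0)
  obtain ⟨K, hK, hMK⟩ := Sylow.exists_subgroup_card_pow_succ hdvd hn
  have hMK' : M < K := hMK.lt_of_ne fun h => by
    subst h
    rw [hn] at hK
    exact (Nat.pow_lt_pow_succ hp.out.one_lt).ne hK
  have hGcard := M.card_mul_index
  rw [← Subgroup.card_top (G := G), ← hM.2 K hMK', hK, hn, pow_succ] at hGcard
  exact Nat.eq_of_mul_eq_mul_left (pow_pos hp.out.pos n) hGcard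

theorem IsPGroup.pow_mem_frattini [Finite G] {p : ℕ} [Fact p.Prime] (hG : IsPGroup p G)
    (g : G) : g ^ p ∈ frattini G := by
  simp only [frattini, Order.radical, Subgroup.mem_iInf]
  intro M hM
  have := hG.isNilpotent
  have : M.Normal :=
    Subgroup.NormalizerCondition.normal_of_coatom M Group.normalizerCondition_of_isNilpotent hM
  simpa [hG.index_eq_of_isCoatom hM] using M.pow_index_mem g

end Frattini

section CentralCommutator

variable {G : Type*} [Group G] {x y z : G}

theorem pow_mul_pow_of_commute_of_mul_eq (hxy : x * y = z * y * x) (hx : Commute x z)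
    (hy : Commute y z) (a b : ℕ) : x ^ a * y ^ b = z ^ (a * b) * y ^ b * x ^ a := by
  have hxa : ∀ a : ℕ, x ^ a * y = z ^ a * y * x ^ a := by
    intro a
    induction a with
    | zero => simp
    | succ a ih =>
      calc x ^ (a + 1) * y = x * z ^ a * y * x ^ a := by rw [pow_succ', mul_assoc, ih]; group
        _ = z ^ a * (x * y) * x ^ a := by rw [(hx.pow_right a).eq]; group
        _ = z ^ (a + 1) * y * x ^ (a + 1) := by rw [hxy]; group
  induction b with
  | zero => simp
  | succ b ih =>
    calc x ^ a * y ^ (b + 1) = z ^ (a * b) * y ^ b * (x ^ a * y) := by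
          rw [pow_succ, ← mul_assoc, ih]; group
      _ = z ^ (a * b) * (y ^ b * z ^ a) * y * x ^ a := by rw [hxa]; group
      _ = z ^ (a * (b + 1)) * y ^ (b + 1) * x ^ a := by rw [(hy.pow_pow b a).eq]; group

theorem collect_pow_mul_pow_mul_pow (hxy : x * y = z * y * x) (hx : Commute x z)
    (hy : Commute y z) (a b c a' b' c' : ℕ) :
    y ^ b * x ^ a * z ^ c * (y ^ b' * x ^ a' * z ^ c') =
      y ^ (b + b') * x ^ (a + a') * z ^ (c + c' + a * b') := by
  have hc : Commute (y ^ b' * x ^ a') (z ^ c) := (hy.pow_pow b' c).mul_left (hx.pow_pow a' c)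
  have hab : Commute (y ^ (b + b') * x ^ (a + a')) (z ^ (a * b')) :=
    (hy.pow_pow _ _).mul_left (hx.pow_pow _ _)
  calc y ^ b * x ^ a * z ^ c * (y ^ b' * x ^ a' * z ^ c')
      = y ^ b * x ^ a * (z ^ c * (y ^ b' * x ^ a')) * z ^ c' := by group
    _ = y ^ b * (x ^ a * y ^ b') * x ^ a' * (z ^ c * z ^ c') := by rw [← hc.eq]; group
    _ = y ^ b * z ^ (a * b') * y ^ b' * x ^ (a + a') * z ^ (c + c') := by
        rw [pow_mul_pow_of_commute_of_mul_eq hxy hx hy]; group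
    _ = z ^ (a * b') * (y ^ (b + b') * x ^ (a + a')) * z ^ (c + c') := by
        rw [(hy.pow_pow b (a * b')).eq]; group
    _ = y ^ (b + b') * x ^ (a + a') * z ^ (c + c' + a * b') := by rw [← hab.eq]; group

end CentralCommutator

theorem pow_val_natCast {G : Type*} [Group G] {g : G} {N : ℕ} (h : g ^ N = 1) (n : ℕ) :
    g ^ (n : ZMod N).val = g ^ n := by
  rw [ZMod.val_natCast, ← pow_eq_pow_mod n h]

def parity (k : ℕ) : ZMod (2 ^ (k + 1)) →+* ZMod 2 :=
  ZMod.castHom (dvd_pow_self 2 k.succ_ne_zero) _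

theorem parity_eq_zero_iff {k : ℕ} (a : ZMod (2 ^ (k + 1))) : parity k a = 0 ↔ 2 ∣ a.val := by
  rw [← ZMod.natCast_eq_zero_iff, ← ZMod.natCast_zmod_val a, map_natCast, ZMod.val_natCast,
    Nat.mod_eq_of_lt a.val_lt]

def doubleHom (k : ℕ) : ZMod (2 ^ k) →+ ZMod (2 ^ (k + 1)) :=
  ZMod.lift _ ⟨zmultiplesHom _ 2, by
    rw [zmultiplesHom_apply, natCast_zsmul, nsmul_eq_mul, Nat.cast_pow, Nat.cast_ofNat,
      ← pow_succ]
    exact_mod_cast ZMod.natCast_self _⟩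

theorem doubleHom_intCast (k : ℕ) (n : ℤ) : doubleHom k n = 2 * n := by
  simp [doubleHom, ZMod.lift_coe, mul_comm]

theorem doubleHom_injective (k : ℕ) : Function.Injective (doubleHom k) := by
  refine (injective_iff_map_eq_zero _).mpr fun u hu => ?_
  obtain ⟨n, rfl⟩ := ZMod.intCast_surjective u
  rw [doubleHom_intCast, ← Int.cast_ofNat, ← Int.cast_mul, ZMod.intCast_zmod_eq_zero_iff_dvd,
    pow_succ', Nat.cast_mul] at hu
  rw [ZMod.intCast_zmod_eq_zero_iff_dvd]
  exact (mul_dvd_mul_iff_left two_ne_zero).mp hu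

theorem parity_doubleHom (k : ℕ) (u : ZMod (2 ^ k)) : parity k (doubleHom k u) = 0 := by
  obtain ⟨n, rfl⟩ := ZMod.intCast_surjective u
  rw [doubleHom_intCast, map_mul, map_ofNat]
  exact zero_mul _

theorem exists_doubleHom_eq_iff {k : ℕ} (a : ZMod (2 ^ (k + 1))) :
    (∃ u, doubleHom k u = a) ↔ parity k a = 0 := by
  refine ⟨fun ⟨u, hu⟩ => hu ▸ parity_doubleHom k u, fun ha => ?_⟩
  obtain ⟨n, rfl⟩ := ZMod.intCast_surjective a
  rw [map_intCast, ZMod.intCast_zmod_eq_zero_iff_dvd] at ha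
  obtain ⟨m, rfl⟩ := ha
  exact ⟨m, by rw [doubleHom_intCast]; push_cast; ring⟩

/-- The triple `(a, b, c)` stands for `y ^ b * x ^ a * z ^ c` in `RedeiGroup (r + 1) (s + 1)`. -/
@[ext]
structure RedeiModel (r s : ℕ) where
  a : ZMod (2 ^ (r + 1))
  b : ZMod (2 ^ (s + 1))
  c : ZMod 2

namespace RedeiModel

variable {r s : ℕ}

instance : Mul (RedeiModel r s) :=
  ⟨fun m n => ⟨m.a + n.a, m.b + n.b, m.c + n.c + parity r m.a * parity s n.b⟩⟩

instance : One (RedeiModel r s) := ⟨⟨0, 0, 0⟩⟩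

instance : Inv (RedeiModel r s) := ⟨fun m => ⟨-m.a, -m.b, -m.c + parity r m.a * parity s m.b⟩⟩

@[simp] theorem mul_a (m n : RedeiModel r s) : (m * n).a = m.a + n.a := rfl
@[simp] theorem mul_b (m n : RedeiModel r s) : (m * n).b = m.b + n.b := rfl
@[simp] theorem mul_c (m n : RedeiModel r s) :
    (m * n).c = m.c + n.c + parity r m.a * parity s n.b := rfl
@[simp] theorem one_a : (1 : RedeiModel r s).a = 0 := rfl
@[simp] theorem one_b : (1 : RedeiModel r s).b = 0 := rfl
@[simp] theorem one_c : (1 : RedeiModel r s).c = 0 := rfl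
@[simp] theorem inv_a (m : RedeiModel r s) : m⁻¹.a = -m.a := rfl
@[simp] theorem inv_b (m : RedeiModel r s) : m⁻¹.b = -m.b := rfl
@[simp] theorem inv_c (m : RedeiModel r s) : m⁻¹.c = -m.c + parity r m.a * parity s m.b := rfl

instance : Group (RedeiModel r s) where
  mul_assoc _ _ _ := by ext <;> simp only [mul_a, mul_b, mul_c, map_add] <;> ring
  one_mul _ := by ext <;> simp
  mul_one _ := by ext <;> simp
  inv_mul_cancel _ := by
    ext <;> simp only [mul_a, mul_b, mul_c, inv_a, inv_b, inv_c, one_a, one_b, one_c, map_neg] <;>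
      ring

def X : RedeiModel r s := ⟨1, 0, 0⟩
def Y : RedeiModel r s := ⟨0, 1, 0⟩
def Z : RedeiModel r s := ⟨0, 0, 1⟩

theorem X_pow (n : ℕ) : (X : RedeiModel r s) ^ n = ⟨n, 0, 0⟩ := by
  induction n with
  | zero => ext <;> simp
  | succ n ih => rw [pow_succ, ih]; ext <;> simp [X]

theorem Y_pow (n : ℕ) : (Y : RedeiModel r s) ^ n = ⟨0, n, 0⟩ := by
  induction n with
  | zero => ext <;> simp
  | succ n ih => rw [pow_succ, ih]; ext <;> simp [Y]

theorem Z_pow (n : ℕ) : (Z : RedeiModel r s) ^ n = ⟨0, 0, n⟩ := by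
  induction n with
  | zero => ext <;> simp
  | succ n ih => rw [pow_succ, ih]; ext <;> simp [Z]

theorem Y_pow_mul_X_pow_mul_Z_pow (a b c : ℕ) :
    (Y : RedeiModel r s) ^ b * X ^ a * Z ^ c = ⟨a, b, c⟩ := by
  ext <;> simp [X_pow, Y_pow, Z_pow]

theorem mk_natCast_mul_mk_natCast (a b c a' b' c' : ℕ) :
    (⟨a, b, c⟩ * ⟨a', b', c'⟩ : RedeiModel r s) =
      ⟨↑(a + a'), ↑(b + b'), ↑(c + c' + a * b')⟩ := by
  ext <;> simp

theorem mk_val (m : RedeiModel r s) : (⟨m.a.val, m.b.val, m.c.val⟩ : RedeiModel r s) = m := by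
  ext <;> simp

theorem mem_center_iff {m : RedeiModel r s} :
    m ∈ Subgroup.center (RedeiModel r s) ↔ parity r m.a = 0 ∧ parity s m.b = 0 := by
  rw [Subgroup.mem_center_iff]
  refine ⟨fun h => ⟨?_, ?_⟩, fun ⟨ha, hb⟩ g => ?_⟩
  · simpa [X, Y] using congrArg c (h Y)
  · simpa [X, Y] using congrArg c (h X)
  · ext <;> simp [ha, hb, add_comm]

theorem commutatorElement_X_Y : ⁅(X : RedeiModel r s), (Y : RedeiModel r s)⁆ = Z := by
  ext <;> simp [commutatorElement_def, X, Y, Z]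

theorem Z_mem_center : (Z : RedeiModel r s) ∈ Subgroup.center (RedeiModel r s) :=
  mem_center_iff.mpr ⟨map_zero _, map_zero _⟩

theorem X_pow_two_pow : (X : RedeiModel r s) ^ 2 ^ (r + 1) = 1 := by
  rw [X_pow, ZMod.natCast_self]; rfl

theorem Y_pow_two_pow : (Y : RedeiModel r s) ^ 2 ^ (s + 1) = 1 := by
  rw [Y_pow, ZMod.natCast_self]; rfl

theorem Z_sq : (Z : RedeiModel r s) ^ 2 = 1 := by
  rw [Z_pow, ZMod.natCast_self]; rfl

theorem commutatorElement_Z_eq_one (m : RedeiModel r s) : ⁅m, (Z : RedeiModel r s)⁆ = 1 :=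
  commutatorElement_eq_one_iff_commute.mpr (Subgroup.mem_center_iff.mp Z_mem_center m)

def equivProd : RedeiModel r s ≃ ZMod (2 ^ (r + 1)) × ZMod (2 ^ (s + 1)) × ZMod 2 where
  toFun m := (m.a, m.b, m.c)
  invFun t := ⟨t.1, t.2.1, t.2.2⟩

instance : Finite (RedeiModel r s) := Finite.of_equiv _ equivProd.symm

theorem natCard_eq : Nat.card (RedeiModel r s) = 2 ^ (r + s + 3) := by
  rw [Nat.card_congr equivProd, Nat.card_prod, Nat.card_prod, Nat.card_zmod, Nat.card_zmod,
    Nat.card_zmod]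
  ring

theorem isPGroup : IsPGroup 2 (RedeiModel r s) := IsPGroup.of_card natCard_eq

theorem center_eq_closure :
    Subgroup.center (RedeiModel r s) = Subgroup.closure {X ^ 2, Y ^ 2, Z} := by
  refine le_antisymm (fun m hm => ?_) (Subgroup.closure_le _ |>.mpr ?_)
  · obtain ⟨ha, hb⟩ := mem_center_iff.mp hm
    obtain ⟨k, hk⟩ := (parity_eq_zero_iff _).mp ha
    obtain ⟨l, hl⟩ := (parity_eq_zero_iff _).mp hb
    rw [← mk_val m, hk, hl, ← Y_pow_mul_X_pow_mul_Z_pow, pow_mul, pow_mul]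
    refine mul_mem (mul_mem ?_ ?_) ?_ <;>
      exact Subgroup.pow_mem _ (Subgroup.subset_closure (by simp)) _
  · rintro m (rfl | rfl | rfl)
    · exact mem_center_iff.mpr
        ⟨by simp only [X_pow, map_natCast, ZMod.natCast_self], by simp [X_pow]⟩
    · exact mem_center_iff.mpr
        ⟨by simp [Y_pow], by simp only [Y_pow, map_natCast, ZMod.natCast_self]⟩
    · exact Z_mem_center

def centerEmbedding :
    Multiplicative (ZMod (2 ^ r)) × Multiplicative (ZMod (2 ^ s)) × Multiplicative (ZMod 2) →*
      RedeiModel r s where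
  toFun t := ⟨doubleHom r t.1.toAdd, doubleHom s t.2.1.toAdd, t.2.2.toAdd⟩
  map_one' := by ext <;> simp
  map_mul' t t' := by ext <;> simp [parity_doubleHom]

theorem centerEmbedding_injective :
    Function.Injective (centerEmbedding : _ →* RedeiModel r s) := by
  intro t t' h
  simp only [centerEmbedding, MonoidHom.coe_mk, OneHom.coe_mk, mk.injEq,
    (doubleHom_injective _).eq_iff] at h
  ext
  exacts [h.1, h.2.1, h.2.2]

theorem range_centerEmbedding :
    (centerEmbedding : _ →* RedeiModel r s).range = Subgroup.center (RedeiModel r s) := by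
  ext m
  rw [MonoidHom.mem_range, mem_center_iff, ← exists_doubleHom_eq_iff, ← exists_doubleHom_eq_iff]
  constructor
  · rintro ⟨t, rfl⟩
    exact ⟨⟨_, rfl⟩, ⟨_, rfl⟩⟩
  · rintro ⟨⟨u, hu⟩, ⟨v, hv⟩⟩
    exact ⟨(.ofAdd u, .ofAdd v, .ofAdd m.c), by ext <;> simp [centerEmbedding, hu, hv]⟩

noncomputable def centerEquivProd : Subgroup.center (RedeiModel r s) ≃*
    Multiplicative (ZMod (2 ^ r)) × Multiplicative (ZMod (2 ^ s)) × Multiplicative (ZMod 2) :=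
  ((MonoidHom.ofInjective centerEmbedding_injective).trans
    (MulEquiv.subgroupCongr range_centerEmbedding)).symm

def parityA : RedeiModel r s →* Multiplicative (ZMod 2) where
  toFun m := .ofAdd (parity r m.a)
  map_one' := by simp
  map_mul' _ _ := by simp

def parityB : RedeiModel r s →* Multiplicative (ZMod 2) where
  toFun m := .ofAdd (parity s m.b)
  map_one' := by simp
  map_mul' _ _ := by simp

theorem parityA_surjective : Function.Surjective (parityA : RedeiModel r s →* _) :=
  fun t => ⟨X ^ t.toAdd.val, by simp [parityA, X_pow]⟩

theorem parityB_surjective : Function.Surjective (parityB : RedeiModel r s →* _) :=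
  fun t => ⟨Y ^ t.toAdd.val, by simp [parityB, Y_pow]⟩

theorem frattini_eq_center : frattini (RedeiModel r s) = Subgroup.center (RedeiModel r s) := by
  refine le_antisymm (fun m hm => mem_center_iff.mpr ⟨?_, ?_⟩) ?_
  · simpa [parityA] using
      frattini_le_ker_of_card_eq_prime (p := 2) (by simp) parityA_surjective hm
  · simpa [parityB] using
      frattini_le_ker_of_card_eq_prime (p := 2) (by simp) parityB_surjective hm
  · have hsq (m : RedeiModel r s) : m ^ 2 ∈ frattini (RedeiModel r s) :=
      isPGroup.pow_mem_frattini m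
    have hZ : (Z : RedeiModel r s) = X ^ 2 * (X⁻¹ * Y) ^ 2 * (Y ^ 2)⁻¹ := by
      simp only [← commutatorElement_X_Y, commutatorElement_def, sq]
      group
    rw [center_eq_closure, Subgroup.closure_le]
    rintro m (rfl | rfl | rfl)
    exacts [hsq X, hsq Y, hZ ▸ mul_mem (mul_mem (hsq X) (hsq _)) (inv_mem (hsq Y))]

end RedeiModel

namespace RedeiGroup

variable {r s : ℕ}

theorem mk_gx : PresentedGroup.mk (redeiRels r s) gx = Dx r s := rfl

theorem mk_gy : PresentedGroup.mk (redeiRels r s) gy = Dy r s := rfl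

theorem mk_commutatorElement_gx_gy : PresentedGroup.mk (redeiRels r s) ⁅gx, gy⁆ = Dz r s := by
  rw [map_commutatorElement, mk_gx, mk_gy, Dz]

theorem Dx_pow_eq_one : Dx r s ^ 2 ^ r = 1 := by
  rw [← mk_gx, ← map_pow]
  exact PresentedGroup.one_of_mem (by simp [redeiRels])

theorem Dy_pow_eq_one : Dy r s ^ 2 ^ s = 1 := by
  rw [← mk_gy, ← map_pow]
  exact PresentedGroup.one_of_mem (by simp [redeiRels])

theorem Dz_sq_eq_one : Dz r s ^ 2 = 1 := by
  rw [← mk_commutatorElement_gx_gy, ← map_pow]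
  exact PresentedGroup.one_of_mem (by simp [redeiRels])

theorem commute_Dx_Dz : Commute (Dx r s) (Dz r s) := by
  rw [← commutatorElement_eq_one_iff_commute, ← mk_gx, ← mk_commutatorElement_gx_gy,
    ← map_commutatorElement]
  exact PresentedGroup.one_of_mem (by simp [redeiRels])

theorem commute_Dy_Dz : Commute (Dy r s) (Dz r s) := by
  rw [← commutatorElement_eq_one_iff_commute, ← mk_gy, ← mk_commutatorElement_gx_gy,
    ← map_commutatorElement]
  exact PresentedGroup.one_of_mem (by simp [redeiRels])

theorem Dx_mul_Dy : Dx r s * Dy r s = Dz r s * Dy r s * Dx r s := by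
  rw [Dz, commutatorElement_def]
  group

end RedeiGroup

namespace RedeiModel

variable {r s : ℕ}

def normalForm (m : RedeiModel r s) : RedeiGroup (r + 1) (s + 1) :=
  Dy _ _ ^ m.b.val * Dx _ _ ^ m.a.val * Dz _ _ ^ m.c.val

theorem normalForm_mk_natCast (a b c : ℕ) :
    normalForm (⟨a, b, c⟩ : RedeiModel r s) = Dy _ _ ^ b * Dx _ _ ^ a * Dz _ _ ^ c := by
  rw [normalForm, pow_val_natCast RedeiGroup.Dx_pow_eq_one,
    pow_val_natCast RedeiGroup.Dy_pow_eq_one, pow_val_natCast RedeiGroup.Dz_sq_eq_one]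

theorem normalForm_mul (m n : RedeiModel r s) :
    normalForm (m * n) = normalForm m * normalForm n := by
  rw [← mk_val m, ← mk_val n, mk_natCast_mul_mk_natCast, normalForm_mk_natCast,
    normalForm_mk_natCast, normalForm_mk_natCast,
    collect_pow_mul_pow_mul_pow RedeiGroup.Dx_mul_Dy RedeiGroup.commute_Dx_Dz
      RedeiGroup.commute_Dy_Dz]

def toRedeiGroup : RedeiModel r s →* RedeiGroup (r + 1) (s + 1) :=
  MonoidHom.mk' normalForm normalForm_mul

theorem toRedeiGroup_mk_natCast (a b c : ℕ) :
    toRedeiGroup (⟨a, b, c⟩ : RedeiModel r s) = Dy _ _ ^ b * Dx _ _ ^ a * Dz _ _ ^ c :=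
  normalForm_mk_natCast a b c

theorem toRedeiGroup_X : toRedeiGroup (X : RedeiModel r s) = Dx _ _ := by
  simpa [X] using toRedeiGroup_mk_natCast (r := r) (s := s) 1 0 0

theorem toRedeiGroup_Y : toRedeiGroup (Y : RedeiModel r s) = Dy _ _ := by
  simpa [Y] using toRedeiGroup_mk_natCast (r := r) (s := s) 0 1 0

theorem toRedeiGroup_Z : toRedeiGroup (Z : RedeiModel r s) = Dz _ _ := by
  rw [← commutatorElement_X_Y, map_commutatorElement, toRedeiGroup_X, toRedeiGroup_Y, Dz]

end RedeiModel

namespace RedeiGroup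

variable {r s : ℕ}

open RedeiModel in
def toModel : RedeiGroup (r + 1) (s + 1) →* RedeiModel r s :=
  PresentedGroup.toGroup (f := ![X, Y]) fun w hw => by
    have hx : FreeGroup.lift ![(X : RedeiModel r s), Y] gx = X := FreeGroup.lift_apply_of
    have hy : FreeGroup.lift ![(X : RedeiModel r s), Y] gy = Y := FreeGroup.lift_apply_of
    rcases hw with rfl | rfl | rfl | rfl | rfl <;>
      simp only [map_pow, map_commutatorElement, hx, hy, commutatorElement_X_Y]
    exacts [X_pow_two_pow, Y_pow_two_pow, Z_sq, commutatorElement_Z_eq_one X,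
      commutatorElement_Z_eq_one Y]

theorem toModel_Dx : toModel (Dx (r + 1) (s + 1)) = RedeiModel.X := PresentedGroup.toGroup.of _

theorem toModel_Dy : toModel (Dy (r + 1) (s + 1)) = RedeiModel.Y := PresentedGroup.toGroup.of _

theorem toModel_Dz : toModel (Dz (r + 1) (s + 1)) = RedeiModel.Z := by
  rw [Dz, map_commutatorElement, toModel_Dx, toModel_Dy, RedeiModel.commutatorElement_X_Y]

noncomputable def equivModel : RedeiGroup (r + 1) (s + 1) ≃* RedeiModel r s :=
  toModel.toMulEquiv RedeiModel.toRedeiGroup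
    (PresentedGroup.ext fun i => by
      fin_cases i
      exacts [congrArg _ toModel_Dx |>.trans RedeiModel.toRedeiGroup_X,
        congrArg _ toModel_Dy |>.trans RedeiModel.toRedeiGroup_Y])
    (MonoidHom.ext fun m => by
      rw [MonoidHom.comp_apply, ← RedeiModel.mk_val m, RedeiModel.toRedeiGroup_mk_natCast,
        map_mul, map_mul, map_pow, map_pow, map_pow, toModel_Dx, toModel_Dy, toModel_Dz,
        RedeiModel.Y_pow_mul_X_pow_mul_Z_pow, MonoidHom.id_apply])

theorem equivModel_symm_apply (m : RedeiModel r s) :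
    equivModel.symm m = RedeiModel.toRedeiGroup m :=
  rfl

end RedeiGroup

theorem stmt1 (r s : ℕ) (hs : 1 ≤ s) (hrs : s ≤ r) :
    frattini (RedeiGroup r s) = Subgroup.center (RedeiGroup r s) ∧
    Subgroup.center (RedeiGroup r s) =
      Subgroup.closure {(Dx r s) ^ 2, (Dy r s) ^ 2, Dz r s} ∧
    Nonempty ((Subgroup.center (RedeiGroup r s)) ≃*
      Multiplicative (ZMod (2 ^ (r - 1))) × Multiplicative (ZMod (2 ^ (s - 1))) ×
        Multiplicative (ZMod 2)) := by
  obtain ⟨r, rfl⟩ : ∃ r', r = r' + 1 := ⟨r - 1, by omega⟩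
  obtain ⟨s, rfl⟩ : ∃ s', s = s' + 1 := ⟨s - 1, by omega⟩
  let e : RedeiGroup (r + 1) (s + 1) ≃* RedeiModel r s := RedeiGroup.equivModel
  refine ⟨?_, ?_, ⟨(Subgroup.centerCongr e).trans RedeiModel.centerEquivProd⟩⟩
  · rw [← e.comap_frattini, RedeiModel.frattini_eq_center, e.comap_center]
  · rw [← e.comap_center, RedeiModel.center_eq_closure, Subgroup.comap_equiv_eq_map_symm,
      MonoidHom.map_closure]
    simp only [Set.image_insert_eq, Set.image_singleton, MonoidHom.coe_coe, map_pow, e,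
      RedeiGroup.equivModel_symm_apply, RedeiModel.toRedeiGroup_X, RedeiModel.toRedeiGroup_Y,
      RedeiModel.toRedeiGroup_Z]
end

section
/- Let D = ⟨x, y | x^(2^r) = y^(2^r) = [x,y]^2 = [x,[x,y]] = [y,[x,y]] = 1⟩ with r ≥ 2. Then the map determined by x ↦ y, y ↦ x⁻¹y⁻¹ extends to an automorphism of D of order 3. -/
open scoped commutatorElement

/-! Because `⁅x, y⁆` is central of order 2, the identity `(y x)^n = y^n x^n ⁅x, y⁆^(n choose 2)`
together with `4 ∣ 2^r` gives `(x⁻¹ y⁻¹)^(2^r) = 1`, and `⁅y, x⁻¹ y⁻¹⁆ = ⁅x, y⁆`. So the pair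
`(y, x⁻¹ y⁻¹)` satisfies the defining relations again and `x ↦ y ↦ x⁻¹ y⁻¹` is an endomorphism.
Its cube fixes `x` and `y`, hence is the identity, and it is not itself the identity because
`x ≠ y` already in the quotient `(ℤ/2)²`. -/

section CentralCommutator

variable {G : Type*} [Group G] {a b c : G}

theorem pow_mul_eq_pow_mul_mul_pow_of_mul_eq (h : a * b = c * b * a) (ha : Commute a c)
    (n : ℕ) : a ^ n * b = c ^ n * b * a ^ n := by
  induction n with
  | zero => simp
  | succ n ih =>
    calc a ^ (n + 1) * b = a * c ^ n * b * a ^ n := by rw [pow_succ', mul_assoc, ih]; group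
      _ = c ^ n * (a * b) * a ^ n := by rw [(ha.pow_right n).eq]; group
      _ = c ^ (n + 1) * b * a ^ (n + 1) := by rw [h]; group

theorem mul_pow_eq_pow_mul_pow_mul_pow_choose_of_mul_eq (h : a * b = c * b * a)
    (ha : Commute a c) (hb : Commute b c) (n : ℕ) :
    (b * a) ^ n = b ^ n * a ^ n * c ^ n.choose 2 := by
  induction n with
  | zero => simp
  | succ n ih =>
    calc (b * a) ^ (n + 1) = b ^ n * a ^ n * (c ^ n.choose 2 * (b * a)) := by
          rw [pow_succ, ih]; group
      _ = b ^ n * (a ^ n * b) * a * c ^ n.choose 2 := by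
          rw [← ((hb.mul_left ha).pow_right _).eq]; group
      _ = b ^ n * (c ^ n * b) * a ^ (n + 1) * c ^ n.choose 2 := by
          rw [pow_mul_eq_pow_mul_mul_pow_of_mul_eq h ha]; group
      _ = b ^ (n + 1) * (c ^ n * a ^ (n + 1)) * c ^ n.choose 2 := by
          rw [← (hb.pow_right n).eq]; group
      _ = b ^ (n + 1) * a ^ (n + 1) * c ^ (n + 1).choose 2 := by
          rw [← (ha.pow_pow (n + 1) n).eq, Nat.choose_succ_succ', Nat.choose_one_right]; group

theorem commutatorElement_right_inv_mul_inv (ha : Commute a ⁅a, b⁆) :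
    ⁅b, a⁻¹ * b⁻¹⁆ = ⁅a, b⁆ := by
  calc ⁅b, a⁻¹ * b⁻¹⁆ = a⁻¹ * ⁅a, b⁆ * a := by simp only [commutatorElement_def]; group
    _ = ⁅a, b⁆ := by rw [mul_assoc, ← ha.eq]; group

end CentralCommutator

theorem two_dvd_choose_two_of_four_dvd {n : ℕ} (h : 4 ∣ n) : 2 ∣ n.choose 2 := by
  rw [Nat.choose_two_right]
  exact Nat.dvd_div_of_mul_dvd (h.mul_right _)

section RedeiPair

variable {G : Type*} [Group G] {r s : ℕ} {a b : G}

structure IsRedeiPair (r s : ℕ) (a b : G) : Prop where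
  pow_left : a ^ 2 ^ r = 1
  pow_right : b ^ 2 ^ s = 1
  commutatorElement_sq : ⁅a, b⁆ ^ 2 = 1
  commute_left : Commute a ⁅a, b⁆
  commute_right : Commute b ⁅a, b⁆

theorem IsRedeiPair.inv_mul_inv_pow (h : IsRedeiPair r r a b) (hr : 2 ≤ r) :
    (a⁻¹ * b⁻¹) ^ 2 ^ r = 1 := by
  have hab : a * b = ⁅a, b⁆ * b * a := by rw [commutatorElement_def]; group
  have hc : ⁅a, b⁆ ^ (2 ^ r).choose 2 = 1 := by
    obtain ⟨k, hk⟩ := two_dvd_choose_two_of_four_dvd (pow_dvd_pow 2 hr)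
    rw [hk, pow_mul, h.commutatorElement_sq, one_pow]
  rw [← mul_inv_rev, inv_pow, mul_pow_eq_pow_mul_pow_mul_pow_choose_of_mul_eq hab
    h.commute_left h.commute_right, h.pow_left, h.pow_right, hc, mul_one, mul_one, inv_one]

theorem IsRedeiPair.rotate (h : IsRedeiPair r r a b) (hr : 2 ≤ r) :
    IsRedeiPair r r b (a⁻¹ * b⁻¹) := by
  have hcomm := commutatorElement_right_inv_mul_inv h.commute_left
  refine ⟨h.pow_right, h.inv_mul_inv_pow hr, ?_, ?_, ?_⟩ <;> rw [hcomm]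
  · exact h.commutatorElement_sq
  · exact h.commute_right
  · exact h.commute_left.inv_left.mul_left h.commute_right.inv_left

end RedeiPair

theorem IsRedeiPair.of_commGroup {G : Type*} [CommGroup G] {r s : ℕ} {a b : G} (hr : r ≠ 0)
    (hs : s ≠ 0) (ha : a ^ 2 = 1) (hb : b ^ 2 = 1) : IsRedeiPair r s a b := by
  have two_pow {t : ℕ} (ht : t ≠ 0) {g : G} (hg : g ^ 2 = 1) : g ^ 2 ^ t = 1 :=
    orderOf_dvd_iff_pow_eq_one.1 ((orderOf_dvd_of_pow_eq_one hg).trans (dvd_pow_self 2 ht))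
  have hab : ⁅a, b⁆ = 1 := commutatorElement_eq_one_iff_commute.2 (Commute.all a b)
  exact ⟨two_pow hr ha, two_pow hs hb, by rw [hab, one_pow], by rw [hab]; exact .one_right a,
    by rw [hab]; exact .one_right b⟩

namespace RedeiGroup

variable {G : Type*} [Group G] {r s : ℕ} {a b : G}

theorem isRedeiPair_Dx_Dy (r s : ℕ) : IsRedeiPair r s (Dx r s) (Dy r s) := by
  have rel : ∀ w ∈ ({gx ^ 2 ^ r, gy ^ 2 ^ s, ⁅gx, gy⁆ ^ 2, ⁅gx, ⁅gx, gy⁆⁆, ⁅gy, ⁅gx, gy⁆⁆} : Set _),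
      PresentedGroup.mk (redeiRels r s) w = 1 :=
    fun _ => PresentedGroup.one_of_mem
  have hx : PresentedGroup.mk (redeiRels r s) gx = Dx r s := rfl
  have hy : PresentedGroup.mk (redeiRels r s) gy = Dy r s := rfl
  simp only [Set.forall_mem_insert, Set.mem_singleton_iff, forall_eq, map_pow,
    map_commutatorElement, hx, hy, commutatorElement_eq_one_iff_commute] at rel
  exact ⟨rel.1, rel.2.1, rel.2.2.1, rel.2.2.2.1, rel.2.2.2.2⟩

def lift (h : IsRedeiPair r s a b) : RedeiGroup r s →* G :=
  PresentedGroup.toGroup (f := ![a, b]) <| by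
    have hx : FreeGroup.lift ![a, b] gx = a := FreeGroup.lift_apply_of
    have hy : FreeGroup.lift ![a, b] gy = b := FreeGroup.lift_apply_of
    rintro w (rfl | rfl | rfl | rfl | rfl) <;>
      simp only [map_pow, map_commutatorElement, hx, hy, commutatorElement_eq_one_iff_commute]
    exacts [h.pow_left, h.pow_right, h.commutatorElement_sq, h.commute_left, h.commute_right]

@[simp]
theorem lift_Dx (h : IsRedeiPair r s a b) : lift h (Dx r s) = a :=
  PresentedGroup.toGroup.of _

@[simp]
theorem lift_Dy (h : IsRedeiPair r s a b) : lift h (Dy r s) = b :=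
  PresentedGroup.toGroup.of _

theorem hom_ext {f g : RedeiGroup r s →* G} (hx : f (Dx r s) = g (Dx r s))
    (hy : f (Dy r s) = g (Dy r s)) : f = g :=
  PresentedGroup.ext fun i => by fin_cases i; exacts [hx, hy]

theorem Dx_ne_Dy (hr : r ≠ 0) (hs : s ≠ 0) : Dx r s ≠ Dy r s := by
  intro hxy
  have hsq (v : Multiplicative (ZMod 2 × ZMod 2)) : v ^ 2 = 1 := by revert v; decide
  have := congrArg (lift (IsRedeiPair.of_commGroup hr hs (hsq (.ofAdd (1, 0)))
    (hsq (.ofAdd (0, 1))))) hxy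
  simp at this

def rotation (hr : 2 ≤ r) : RedeiGroup r r →* RedeiGroup r r :=
  lift ((isRedeiPair_Dx_Dy r r).rotate hr)

theorem rotation_rotation_rotation (hr : 2 ≤ r) (g : RedeiGroup r r) :
    rotation hr (rotation hr (rotation hr g)) = g := by
  suffices ((rotation hr).comp (rotation hr)).comp (rotation hr) = MonoidHom.id _ from
    DFunLike.congr_fun this g
  refine hom_ext ?_ ?_ <;> simp [rotation]

def rotationAut (hr : 2 ≤ r) : MulAut (RedeiGroup r r) :=
  (rotation hr).toMulEquiv ((rotation hr).comp (rotation hr))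
    (MonoidHom.ext (rotation_rotation_rotation hr)) (MonoidHom.ext (rotation_rotation_rotation hr))

@[simp]
theorem rotationAut_Dx (hr : 2 ≤ r) : rotationAut hr (Dx r r) = Dy r r :=
  lift_Dx ((isRedeiPair_Dx_Dy r r).rotate hr)

@[simp]
theorem rotationAut_Dy (hr : 2 ≤ r) : rotationAut hr (Dy r r) = (Dx r r)⁻¹ * (Dy r r)⁻¹ :=
  lift_Dy ((isRedeiPair_Dx_Dy r r).rotate hr)

theorem orderOf_rotationAut (hr : 2 ≤ r) : orderOf (rotationAut hr) = 3 := by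
  refine orderOf_eq_prime (MulEquiv.ext (rotation_rotation_rotation hr)) fun h => ?_
  have := DFunLike.congr_fun h (Dx r r)
  rw [rotationAut_Dx] at this
  exact Dx_ne_Dy (by omega) (by omega) this.symm

end RedeiGroup

theorem stmt7 (r : ℕ) (hr : 2 ≤ r) :
    ∃ α : MulAut (RedeiGroup r r),
      α (Dx r r) = Dy r r ∧ α (Dy r r) = (Dx r r)⁻¹ * (Dy r r)⁻¹ ∧
      orderOf α = 3 :=
  ⟨RedeiGroup.rotationAut hr, RedeiGroup.rotationAut_Dx hr, RedeiGroup.rotationAut_Dy hr,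
    RedeiGroup.orderOf_rotationAut hr⟩
end
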